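/- If m is a right-negative Laurent monomial and m' ≤ m (i.e., m·(m')⁻¹ is a product of monomials A_{i,a}, equivalently m' is obtained from m by multiplying by monomials A_{i,a}⁻¹), then m' is right-negative. -/

import Mathlib

/-!
Right-negative monomials are closed under multiplication: if `m` and `p` are right-negative and
`m p` has no variable to the right of `aqˢ`, then, scanning the spectral parameters downwards from
the right, at each position `t > s` both `m` and `p` have only non-positive exponents whose sums
vanish, so `m` and `p` themselves have no variable to the right of `aqˢ`. Each `A_{i,a}⁻¹` is
right-negative (its rightmost variable, `Y_{1,aq}` resp. `Y_{2,aq³}`, has exponent `-1`), hence so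
is every element of `(Q⁺)⁻¹`, and `m' = m · (m (m')⁻¹)⁻¹`.
-/

/-- Right-negativity of a Laurent monomial, encoded additively by its exponent
function on the variables `Y_{i, aqˢ}`. -/
def RightNegative (m : (Fin 2 × ℤ) →₀ ℤ) : Prop :=
  ∀ (i : Fin 2) (s : ℤ), m (i, s) ≠ 0 →
    (∀ (j : Fin 2) (k : ℤ), 0 < k → m (j, s + k) = 0) → m (i, s) < 0

/-- `A_{1,aqⁿ} = Y_{1,aq^{n+1}} Y_{1,aq^{n-1}} Y_{2,aqⁿ}⁻¹` (additive encoding). -/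
noncomputable def A₁ (n : ℤ) : (Fin 2 × ℤ) →₀ ℤ :=
  Finsupp.single (0, n + 1) 1 + Finsupp.single (0, n - 1) 1 - Finsupp.single (1, n) 1

/-- `A_{2,aqⁿ} = Y_{2,aq^{n+3}} Y_{2,aq^{n-3}} Y_{1,aq^{n-2}}⁻¹ Y_{1,aqⁿ}⁻¹ Y_{1,aq^{n+2}}⁻¹`. -/
noncomputable def A₂ (n : ℤ) : (Fin 2 × ℤ) →₀ ℤ :=
  Finsupp.single (1, n + 3) 1 + Finsupp.single (1, n - 3) 1 - Finsupp.single (0, n - 2) 1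
    - Finsupp.single (0, n) 1 - Finsupp.single (0, n + 2) 1

def VanishesAfter (m : (Fin 2 × ℤ) →₀ ℤ) (s : ℤ) : Prop :=
  ∀ (j : Fin 2) (k : ℤ), 0 < k → m (j, s + k) = 0

section

variable {m p : (Fin 2 × ℤ) →₀ ℤ} {s t : ℤ}

theorem VanishesAfter.mono (h : VanishesAfter m s) (hst : s ≤ t) : VanishesAfter m t := by
  intro j k hk
  simpa [show s + (t - s + k) = t + k by ring] using h j (t - s + k) (by omega)

theorem VanishesAfter.sub_one (h : VanishesAfter m s) (hs : ∀ j, m (j, s) = 0) :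
    VanishesAfter m (s - 1) := by
  intro j k hk
  rcases eq_or_lt_of_le (show 1 ≤ k by omega) with rfl | hk1
  · simpa using hs j
  · simpa [show s + (k - 1) = s - 1 + k by ring] using h j (k - 1) (by omega)

theorem exists_vanishesAfter (m : (Fin 2 × ℤ) →₀ ℤ) : ∃ N, VanishesAfter m N := by
  obtain ⟨N, hN⟩ := (m.support.image Prod.snd).bddAbove
  refine ⟨N, fun j k hk => ?_⟩
  by_contra hne
  have : N + k ≤ N := hN (Finset.mem_image_of_mem Prod.snd (Finsupp.mem_support_iff.mpr hne))
  omega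

theorem RightNegative.apply_nonpos (hm : RightNegative m) (h : VanishesAfter m s) (i : Fin 2) :
    m (i, s) ≤ 0 := by
  by_cases hi : m (i, s) = 0
  · exact hi.le
  · exact (hm i s hi h).le

theorem rightNegative_of_vanishesAfter (h : VanishesAfter m t) (hnonpos : ∀ j, m (j, t) ≤ 0)
    {i₀ : Fin 2} (hi₀ : m (i₀, t) ≠ 0) : RightNegative m := by
  intro i s hi hs
  rcases lt_trichotomy s t with hst | rfl | hts
  · exact absurd (by simpa using hs i₀ (t - s) (by omega)) hi₀
  · exact lt_of_le_of_ne (hnonpos i) hi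
  · exact absurd (by simpa using h i (s - t) (by omega)) hi

theorem RightNegative.vanishesAfter_of_add (hm : RightNegative m) (hp : RightNegative p)
    (h : VanishesAfter (m + p) s) : VanishesAfter m s ∧ VanishesAfter p s := by
  obtain ⟨M, hM⟩ := exists_vanishesAfter m
  obtain ⟨P, hP⟩ := exists_vanishesAfter p
  suffices ∀ t ≤ max (max M P) s, s ≤ t → VanishesAfter m t ∧ VanishesAfter p t from
    this s (le_max_right _ _) le_rfl
  intro t ht
  induction t, ht using Int.leInductionDown with
  | base => exact fun _ => ⟨hM.mono (by omega), hP.mono (by omega)⟩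
  | pred t _ ih =>
    intro hst
    obtain ⟨hmt, hpt⟩ := ih (by omega)
    have hzero : ∀ j, m (j, t) = 0 ∧ p (j, t) = 0 := fun j => by
      have hsum : m (j, t) + p (j, t) = 0 := by simpa using h j (t - s) (by omega)
      have := hm.apply_nonpos hmt j
      have := hp.apply_nonpos hpt j
      omega
    exact ⟨hmt.sub_one fun j => (hzero j).1, hpt.sub_one fun j => (hzero j).2⟩

theorem RightNegative.add (hm : RightNegative m) (hp : RightNegative p) :
    RightNegative (m + p) := by
  intro i s hi hs
  obtain ⟨hms, hps⟩ := hm.vanishesAfter_of_add hp hs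
  have := hm.apply_nonpos hms i
  have := hp.apply_nonpos hps i
  rw [Finsupp.add_apply] at hi ⊢
  omega

end

theorem rightNegative_neg_A₁ (n : ℤ) : RightNegative (-A₁ n) := by
  refine rightNegative_of_vanishesAfter (t := n + 1) (i₀ := 0)
    (fun j k hk => ?_) (fun j => ?_) ?_ <;>
    simp only [A₁, Finsupp.neg_apply, Finsupp.add_apply, Finsupp.sub_apply,
      Finsupp.single_apply, Prod.mk.injEq] <;>
    split_ifs <;> omega

theorem rightNegative_neg_A₂ (n : ℤ) : RightNegative (-A₂ n) := by
  refine rightNegative_of_vanishesAfter (t := n + 3) (i₀ := 1)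
    (fun j k hk => ?_) (fun j => ?_) ?_ <;>
    simp only [A₂, Finsupp.neg_apply, Finsupp.add_apply, Finsupp.sub_apply,
      Finsupp.single_apply, Prod.mk.injEq] <;>
    split_ifs <;> omega

theorem rightNegative_neg_of_mem_closure {q : (Fin 2 × ℤ) →₀ ℤ}
    (hq : q ∈ AddSubmonoid.closure {x : (Fin 2 × ℤ) →₀ ℤ | ∃ n, x = A₁ n ∨ x = A₂ n}) :
    RightNegative (-q) := by
  induction hq using AddSubmonoid.closure_induction with
  | mem x hx =>
    obtain ⟨n, rfl | rfl⟩ := hx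
    exacts [rightNegative_neg_A₁ n, rightNegative_neg_A₂ n]
  | zero => exact fun i s hi => absurd (by simp) hi
  | add x y _ _ hx hy => rw [neg_add]; exact hx.add hy

/-- If `m` is right-negative and `m' ≤ m`, i.e. `m (m')⁻¹` lies in the monoid `Q⁺`
generated by the `A_{i,a}`, then `m'` is right-negative. -/
theorem rightNegative_of_le (m m' : (Fin 2 × ℤ) →₀ ℤ)
    (hm : RightNegative m)
    (h : m - m' ∈ AddSubmonoid.closure {x : (Fin 2 × ℤ) →₀ ℤ | ∃ n, x = A₁ n ∨ x = A₂ n}) :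
    RightNegative m' := by
  simpa using hm.add (rightNegative_neg_of_mem_closure h)
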